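/- Equip P = k[x₁,x₂,x₃] with the Poisson bracket {x₁,x₂} = x₁x₂, {x₂,x₃} = 3x₁² + 2x₁x₂ + x₂x₃, {x₃,x₁} = x₁² + x₁x₃. Then for an invertible matrix M = (a_{ij}): (i) φ_M is a graded Poisson automorphism of P if and only if M = [[a,0,0],[0,a²/b,0],[b−a,0,b]] for some a, b ∈ k \ {0}; (ii) φ_M is a Poisson reflection of P if and only if M = [[−1,0,0],[0,1,0],[2,0,1]]. -/

import Mathlib

open MvPolynomial

/-- The bracket on `k[x₁,x₂,x₃]` determined by the values `p12 = {x₁,x₂}`, `p23 = {x₂,x₃}`,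
`p31 = {x₃,x₁}` via `{f,g} = Σ_{i<j} (∂f/∂xᵢ·∂g/∂xⱼ − ∂f/∂xⱼ·∂g/∂xᵢ)·{xᵢ,xⱼ}`. -/
noncomputable def jacBracket {k : Type*} [Field k] (p12 p23 p31 : MvPolynomial (Fin 3) k)
    (f g : MvPolynomial (Fin 3) k) : MvPolynomial (Fin 3) k :=
  (pderiv 0 f * pderiv 1 g - pderiv 1 f * pderiv 0 g) * p12 +
    (pderiv 1 f * pderiv 2 g - pderiv 2 f * pderiv 1 g) * p23 +
    (pderiv 2 f * pderiv 0 g - pderiv 0 f * pderiv 2 g) * p31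

/-- The graded algebra endomorphism `φ_M` of `k[x₁,x₂,x₃]` with `φ_M(xᵢ) = Σⱼ M i j · xⱼ`. -/
noncomputable def phiM {k : Type*} [Field k] (M : Matrix (Fin 3) (Fin 3) k) :
    MvPolynomial (Fin 3) k →ₐ[k] MvPolynomial (Fin 3) k :=
  aeval fun i => ∑ j, C (M i j) * X j

/-- `φ_M` is a graded Poisson automorphism (for invertible `M`) iff it preserves the bracket. -/
def IsPoissonAut {k : Type*} [Field k]
    (br : MvPolynomial (Fin 3) k → MvPolynomial (Fin 3) k → MvPolynomial (Fin 3) k)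
    (M : Matrix (Fin 3) (Fin 3) k) : Prop :=
  ∀ f g, phiM M (br f g) = br (phiM M f) (phiM M g)

/-- `φ_M` is a Poisson reflection: a graded Poisson automorphism of finite order whose
eigenvalues are `1, 1, ξ` for some root of unity `ξ ≠ 1`. -/
def IsPoissonReflection {k : Type*} [Field k]
    (br : MvPolynomial (Fin 3) k → MvPolynomial (Fin 3) k → MvPolynomial (Fin 3) k)
    (M : Matrix (Fin 3) (Fin 3) k) : Prop :=
  IsPoissonAut br M ∧ (∃ n, 0 < n ∧ M ^ n = 1) ∧
    ∃ ξ : k, ξ ≠ 1 ∧ (∃ m, 0 < m ∧ ξ ^ m = 1) ∧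
      M.charpoly = (Polynomial.X - 1) ^ 2 * (Polynomial.X - Polynomial.C ξ)

/-! The Jacobian bracket is a biderivation, so `φ_M` is Poisson as soon as it preserves the
brackets of the generators. Since the `φ_M(xᵢ)` are linear forms, that condition reads
`{xᵢ,xⱼ}(Mv) = Σ_{a<b} Δᵢⱼ,ₐᵦ · {xₐ,xᵦ}(v)` for all `v`, with `Δᵢⱼ,ₐᵦ` the `2 × 2` minors of `M`.
For the bracket at hand, the coefficients of `x₂²` and `x₃²` force the first row of `M` to be
`(a, 0, 0)`; then `det M ≠ 0` lets one cancel `a` in the remaining coefficient equations, which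
determine `M`. For a reflection, `(X - a)(X - a²/b)(X - b) = (X - 1)²(X - ξ)`: the constant terms
give `ξ = a³`, so `a` is a root of `(X - 1)²(X - a³)`, whence `a = -1` and then `b = 1`. -/

open scoped Matrix

section JacBracket

variable {k : Type*} [Field k] (p12 p23 p31 : MvPolynomial (Fin 3) k)

lemma jacBracket_C_left (c : k) (g : MvPolynomial (Fin 3) k) :
    jacBracket p12 p23 p31 (C c) g = 0 := by
  simp [jacBracket]

lemma jacBracket_C_right (f : MvPolynomial (Fin 3) k) (c : k) :
    jacBracket p12 p23 p31 f (C c) = 0 := by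
  simp [jacBracket]

lemma jacBracket_add_left (f g h : MvPolynomial (Fin 3) k) :
    jacBracket p12 p23 p31 (f + g) h
      = jacBracket p12 p23 p31 f h + jacBracket p12 p23 p31 g h := by
  simp only [jacBracket, map_add]; ring

lemma jacBracket_add_right (f g h : MvPolynomial (Fin 3) k) :
    jacBracket p12 p23 p31 f (g + h)
      = jacBracket p12 p23 p31 f g + jacBracket p12 p23 p31 f h := by
  simp only [jacBracket, map_add]; ring

lemma jacBracket_mul_left (f g h : MvPolynomial (Fin 3) k) :
    jacBracket p12 p23 p31 (f * g) h
      = f * jacBracket p12 p23 p31 g h + g * jacBracket p12 p23 p31 f h := by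
  simp only [jacBracket, Derivation.leibniz, smul_eq_mul]; ring

lemma jacBracket_mul_right (f g h : MvPolynomial (Fin 3) k) :
    jacBracket p12 p23 p31 f (g * h)
      = g * jacBracket p12 p23 p31 f h + h * jacBracket p12 p23 p31 f g := by
  simp only [jacBracket, Derivation.leibniz, smul_eq_mul]; ring

lemma eval_phiM (M : Matrix (Fin 3) (Fin 3) k) (v : Fin 3 → k) (f : MvPolynomial (Fin 3) k) :
    eval v (phiM M f) = eval (M *ᵥ v) f := by
  induction f using MvPolynomial.induction_on with
  | C c => simp
  | add p q hp hq => simp [hp, hq]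
  | mul_X p i hp => rw [map_mul, map_mul, hp]; simp [phiM, Matrix.mulVec, dotProduct]

lemma pderiv_phiM_X (M : Matrix (Fin 3) (Fin 3) k) (i l : Fin 3) :
    pderiv l (phiM M (X i)) = C (M i l) := by
  simp [phiM, pderiv_X, Pi.single_apply]

lemma jacBracket_phiM_X (M : Matrix (Fin 3) (Fin 3) k) (i j : Fin 3) :
    jacBracket p12 p23 p31 (phiM M (X i)) (phiM M (X j)) =
      C (M i 0 * M j 1 - M i 1 * M j 0) * p12 + C (M i 1 * M j 2 - M i 2 * M j 1) * p23 +
        C (M i 2 * M j 0 - M i 0 * M j 2) * p31 := by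
  simp only [jacBracket, pderiv_phiM_X, map_sub, map_mul]

lemma isPoissonAut_of_forall_X (M : Matrix (Fin 3) (Fin 3) k)
    (h : ∀ i j, phiM M (jacBracket p12 p23 p31 (X i) (X j))
      = jacBracket p12 p23 p31 (phiM M (X i)) (phiM M (X j))) :
    IsPoissonAut (jacBracket p12 p23 p31) M := by
  have h_X_left : ∀ i g, phiM M (jacBracket p12 p23 p31 (X i) g)
      = jacBracket p12 p23 p31 (phiM M (X i)) (phiM M g) := by
    intro i g
    induction g using MvPolynomial.induction_on with
    | C c => simp [jacBracket_C_right]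
    | add p q hp hq => rw [jacBracket_add_right, map_add, hp, hq, map_add, jacBracket_add_right]
    | mul_X p j hp =>
      rw [jacBracket_mul_right, map_add, map_mul, map_mul, hp, h i j, map_mul,
        jacBracket_mul_right]
  intro f g
  induction f using MvPolynomial.induction_on with
  | C c => simp [jacBracket_C_left]
  | add p q hp hq => rw [jacBracket_add_left, map_add, hp, hq, map_add, jacBracket_add_left]
  | mul_X p j hp =>
    rw [jacBracket_mul_left, map_add, map_mul, map_mul, hp, h_X_left j g, map_mul,
      jacBracket_mul_left]

theorem isPoissonAut_jacBracket_iff [Infinite k] (M : Matrix (Fin 3) (Fin 3) k) :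
    IsPoissonAut (jacBracket p12 p23 p31) M ↔ ∀ i j v,
      eval (M *ᵥ v) (jacBracket p12 p23 p31 (X i) (X j)) =
        (M i 0 * M j 1 - M i 1 * M j 0) * eval v p12 +
          (M i 1 * M j 2 - M i 2 * M j 1) * eval v p23 +
            (M i 2 * M j 0 - M i 0 * M j 2) * eval v p31 := by
  constructor
  · intro H i j v
    rw [← eval_phiM, H, jacBracket_phiM_X]
    simp
  · refine fun h => isPoissonAut_of_forall_X p12 p23 p31 M fun i j =>
      MvPolynomial.funext fun v => ?_
    rw [eval_phiM, h, jacBracket_phiM_X]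
    simp

end JacBracket

lemma charpoly_lowerTriangular_fin_three {k : Type*} [Field k] (a d e g h b : k) :
    (!![a, 0, 0; d, e, 0; g, h, b]).charpoly =
      (Polynomial.X - Polynomial.C a) *
        ((Polynomial.X - Polynomial.C e) * (Polynomial.X - Polynomial.C b)) := by
  rw [Matrix.charpoly, Matrix.det_fin_three]
  simp [Matrix.charmatrix_apply_eq, Matrix.charmatrix_apply_ne]
  ring

namespace Polynomial

lemma eq_neg_one_of_X_sub_C_mul_eq {k : Type*} [Field k] {a e b ξ : k} (ha : a ≠ 0)
    (heb : e * b = a ^ 2) (hξ : ξ ≠ 1)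
    (h : (X - C a) * ((X - C e) * (X - C b)) = (X - 1) ^ 2 * (X - C ξ)) :
    a = -1 ∧ e = 1 ∧ b = 1 := by
  have hξa : ξ = a ^ 3 := by
    have h0 := congrArg (eval 0) h
    simp only [eval_mul, eval_sub, eval_X, eval_C, zero_sub, mul_neg, neg_mul, neg_neg,
      eval_pow, eval_one, even_two, Even.neg_pow, one_pow, one_mul, neg_inj] at h0
    linear_combination -h0 + a * heb
  have ha' : a = -1 := by
    have h_a := congrArg (eval a) h
    simp only [eval_mul, eval_sub, eval_X, eval_C, sub_self, zero_mul, eval_pow, eval_one] at h_a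
    have h_roots : a * (a - 1) ^ 3 * (a + 1) = 0 := by
      linear_combination h_a - (a - 1) ^ 2 * hξa
    rcases mul_eq_zero.1 h_roots with h_roots | h_roots
    · rcases mul_eq_zero.1 h_roots with h_roots | h_roots
      · exact absurd h_roots ha
      · refine absurd ?_ hξ
        rw [hξa, sub_eq_zero.1 (pow_eq_zero_iff three_ne_zero |>.1 h_roots), one_pow]
    · exact eq_neg_of_add_eq_zero_left h_roots
  subst ha'
  have h' : (X - C e) * (X - C b) = (X - 1) ^ 2 :=
    mul_left_cancel₀ (X_sub_C_ne_zero (-1)) (by rw [h, hξa]; simp; ring)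
  have he := congrArg (eval e) h'
  have hb := congrArg (eval b) h'
  simp only [eval_mul, eval_sub, eval_X, eval_C, sub_self, zero_mul, mul_zero, eval_pow,
    eval_one] at he hb
  exact ⟨rfl, sub_eq_zero.1 (pow_eq_zero_iff two_ne_zero |>.1 he.symm),
    sub_eq_zero.1 (pow_eq_zero_iff two_ne_zero |>.1 hb.symm)⟩

end Polynomial

section

local notation "𝔟" => jacBracket (X 0 * X 1) (3 * X 0 ^ 2 + 2 * X 0 * X 1 + X 1 * X 2) (X 0 ^ 2 + X 0 * X 2)

variable {k : Type*} [Field k] [CharZero k] {M : Matrix (Fin 3) (Fin 3) k}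

lemma isPoissonAut_matrix_of_ne_zero {a b : k} (hb : b ≠ 0) :
    IsPoissonAut 𝔟 !![a, 0, 0; 0, a ^ 2 / b, 0; b - a, 0, b] := by
  rw [isPoissonAut_jacBracket_iff]
  intro i j v
  fin_cases i <;> fin_cases j <;>
    simp [jacBracket, dotProduct, Fin.sum_univ_three, -mul_eq_zero, -zero_eq_mul] <;>
    field_simp <;> ring

lemma row_zero_eq_of_isPoissonAut (H : IsPoissonAut 𝔟 M) : M 0 1 = 0 ∧ M 0 2 = 0 := by
  have h := (isPoissonAut_jacBracket_iff _ _ _ M).1 H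
  have h01_e1 := h 0 1 ![0, 1, 0]
  have h01_e2 := h 0 1 ![0, 0, 1]
  have h12_e1 := h 1 2 ![0, 1, 0]
  have h12_e2 := h 1 2 ![0, 0, 1]
  simp [jacBracket, Matrix.mulVec, dotProduct, Fin.sum_univ_three, -mul_eq_zero]
    at h01_e1 h01_e2 h12_e1 h12_e2
  have h02 : M 0 2 = 0 := pow_eq_zero_iff three_ne_zero |>.1 <| by
    linear_combination (1 / 3 : k) * (M 0 2 * h12_e2 - (2 * M 0 2 + M 2 2) * h01_e2)
  have h01 : M 0 1 = 0 := pow_eq_zero_iff three_ne_zero |>.1 <| by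
    linear_combination (1 / 3 : k) * (M 0 1 * h12_e1 - (2 * M 0 1 + M 2 1) * h01_e1)
  exact ⟨h01, h02⟩

lemma exists_eq_of_isPoissonAut (hM : M.det ≠ 0) (H : IsPoissonAut 𝔟 M) :
    ∃ a b : k, a ≠ 0 ∧ b ≠ 0 ∧ M = !![a, 0, 0; 0, a ^ 2 / b, 0; b - a, 0, b] := by
  obtain ⟨h01, h02⟩ := row_zero_eq_of_isPoissonAut H
  have hdet : M 0 0 * (M 1 1 * M 2 2 - M 1 2 * M 2 1) ≠ 0 := by
    convert hM using 1
    rw [Matrix.det_fin_three, h01, h02]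
    ring
  obtain ⟨h00, hminor⟩ := mul_ne_zero_iff.1 hdet
  have h := (isPoissonAut_jacBracket_iff _ _ _ M).1 H
  -- a basis vector reads off the coefficient of a square, a sum of two (minus those) a mixed one
  have h01_e0 := h 0 1 ![1, 0, 0]
  have h01_e02 := h 0 1 ![1, 0, 1]
  have h20_e0 := h 2 0 ![1, 0, 0]
  have h20_e01 := h 2 0 ![1, 1, 0]
  have h12_e0 := h 1 2 ![1, 0, 0]
  have h12_e1 := h 1 2 ![0, 1, 0]
  have h12_e01 := h 1 2 ![1, 1, 0]
  simp [jacBracket, Matrix.mulVec, dotProduct, Fin.sum_univ_three, h01, h02, -mul_eq_zero]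
    at h01_e0 h01_e02 h20_e0 h20_e01 h12_e0 h12_e1 h12_e01
  have h12 : M 1 2 = 0 := mul_left_cancel₀ h00 <| by linear_combination (h01_e02 - h01_e0) / 2
  have h10 : M 1 0 = 0 := mul_left_cancel₀ h00 <| by linear_combination h01_e0 - M 0 0 * h12
  have h21 : M 2 1 = 0 := mul_left_cancel₀ h00 <| by linear_combination (h20_e01 - h20_e0) / 2
  rw [h12, zero_mul, sub_zero] at hminor
  obtain ⟨h11, h22⟩ := mul_ne_zero_iff.1 hminor
  have h20 : M 2 0 = M 2 2 - M 0 0 := mul_left_cancel₀ h11 <| by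
    linear_combination (h12_e01 - h12_e0 - h12_e1) / 2 - M 2 1 * h12
  have h11_eq : M 1 1 = M 0 0 ^ 2 / M 2 2 := by
    rw [eq_div_iff h22]
    linear_combination -h12_e0 / 3 + (2 * M 0 0 + M 2 0 + M 2 2) / 3 * h10
      + (M 2 1 - M 2 0 / 3) * h12
  refine ⟨M 0 0, M 2 2, h00, h22, ?_⟩
  ext i j
  fin_cases i <;> fin_cases j <;> simp [h01, h02, h10, h11_eq, h12, h20, h21]

lemma eq_of_isPoissonReflection (hM : M.det ≠ 0) (H : IsPoissonReflection 𝔟 M) :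
    M = !![-1, 0, 0; 0, 1, 0; 2, 0, 1] := by
  obtain ⟨hAut, -, ξ, hξ, -, hcharpoly⟩ := H
  obtain ⟨a, b, ha, hb, rfl⟩ := exists_eq_of_isPoissonAut hM hAut
  rw [charpoly_lowerTriangular_fin_three] at hcharpoly
  obtain ⟨rfl, -, rfl⟩ :=
    Polynomial.eq_neg_one_of_X_sub_C_mul_eq ha (div_mul_cancel₀ _ hb) hξ hcharpoly
  norm_num

lemma isPoissonReflection_matrix :
    IsPoissonReflection 𝔟 (!![-1, 0, 0; 0, 1, 0; 2, 0, 1] : Matrix (Fin 3) (Fin 3) k) := by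
  refine ⟨?_, ⟨2, two_pos, ?_⟩, -1, by norm_num, ⟨2, two_pos, by norm_num⟩, ?_⟩
  · convert isPoissonAut_matrix_of_ne_zero (k := k) (a := -1) one_ne_zero using 2
    norm_num
  · ext i j
    fin_cases i <;> fin_cases j <;> simp [sq, Matrix.mul_apply, Fin.sum_univ_three]
  · rw [charpoly_lowerTriangular_fin_three]
    simp only [map_neg, map_one]
    ring

end

theorem stmt_9_general {k : Type*} [Field k] [CharZero k]
    (M : Matrix (Fin 3) (Fin 3) k) (hM : IsUnit M.det) :
    (IsPoissonAut (jacBracket (X 0 * X 1) (3 * X 0 ^ 2 + 2 * X 0 * X 1 + X 1 * X 2)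
        (X 0 ^ 2 + X 0 * X 2)) M ↔
      ∃ a b : k, a ≠ 0 ∧ b ≠ 0 ∧ M = !![a, 0, 0; 0, a ^ 2 / b, 0; b - a, 0, b]) ∧
    (IsPoissonReflection (jacBracket (X 0 * X 1) (3 * X 0 ^ 2 + 2 * X 0 * X 1 + X 1 * X 2)
        (X 0 ^ 2 + X 0 * X 2)) M ↔
      M = !![-1, 0, 0; 0, 1, 0; 2, 0, 1]) := by
  refine ⟨⟨exists_eq_of_isPoissonAut hM.ne_zero, ?_⟩,
    ⟨eq_of_isPoissonReflection hM.ne_zero, ?_⟩⟩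
  · rintro ⟨a, b, -, hb, rfl⟩
    exact isPoissonAut_matrix_of_ne_zero hb
  · rintro rfl
    exact isPoissonReflection_matrix

/-- Case `{x₁,x₂} = x₁x₂`, `{x₂,x₃} = 3x₁² + 2x₁x₂ + x₂x₃`, `{x₃,x₁} = x₁² + x₁x₃`. -/
theorem stmt_9 {k : Type*} [Field k] [IsAlgClosed k] [CharZero k]
    (M : Matrix (Fin 3) (Fin 3) k) (hM : IsUnit M.det) :
    (IsPoissonAut (jacBracket (X 0 * X 1) (3 * X 0 ^ 2 + 2 * X 0 * X 1 + X 1 * X 2)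
        (X 0 ^ 2 + X 0 * X 2)) M ↔
      ∃ a b : k, a ≠ 0 ∧ b ≠ 0 ∧ M = !![a, 0, 0; 0, a ^ 2 / b, 0; b - a, 0, b]) ∧
    (IsPoissonReflection (jacBracket (X 0 * X 1) (3 * X 0 ^ 2 + 2 * X 0 * X 1 + X 1 * X 2)
        (X 0 ^ 2 + X 0 * X 2)) M ↔
      M = !![-1, 0, 0; 0, 1, 0; 2, 0, 1]) :=
  stmt_9_general M hM
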